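/- Let G be a d-bounded graph with d ≥ 2 in which every connected component that is not an isolated vertex either contains a vertex of degree at most d−1 or contains a cycle. Then any two connected components C1, C2 of G that are not isolated vertices can be merged into one connected component by modifying (adding or deleting) at most 3 edges, without exceeding maximum degree d. -/

import Mathlib

/-!
Each of the two components has an attachment point: a vertex of degree at most `d - 1`, or,
if every vertex has degree `d`, an endpoint of an edge on a cycle, which becomes such a vertex
once that edge is deleted; as the edge is not a bridge, its component stays connected. Joining
the two attachment points by a new edge then costs at most `1 + 1 + 1` edge modifications and
raises only their degrees, each by one.
-/

open SimpleGraph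

namespace SimpleGraph

variable {V : Type*} {G H : SimpleGraph V} {u v x : V}

lemma Walk.reachable_of_mem_support (p : G.Walk u v) (hx : x ∈ p.support) : G.Reachable u x := by
  classical
  exact ⟨p.takeUntil x hx⟩

lemma ConnectedComponent.mem_supp_of_reachable (c : G.ConnectedComponent) (hu : u ∈ c.supp)
    (huv : G.Reachable u v) : v ∈ c.supp :=
  (ConnectedComponent.sound huv).symm.trans hu

lemma Reachable.of_forall_adj (h : ∀ ⦃a b⦄, G.Adj a b → H.Reachable a b)
    (huv : G.Reachable u v) : H.Reachable u v := by
  simp only [reachable_iff_reflTransGen] at h huv ⊢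
  exact Relation.reflTransGen_closed h _ _ huv

lemma Reachable.deleteEdges_of_not_isBridge {e : Sym2 V} (he : ¬G.IsBridge e)
    (huv : G.Reachable u v) : (G.deleteEdges {e}).Reachable u v := by
  refine huv.of_forall_adj fun a b hab => ?_
  by_cases hab' : s(a, b) = e
  · subst hab'
    rwa [isBridge_iff, not_not] at he
  · exact Adj.reachable (by simpa [hab'] using hab)

lemma Reachable.deleteEdges_union {s t : Set (Sym2 V)} (huv : (G.deleteEdges s).Reachable u v)
    (ht : ∀ e ∈ t, ∀ x ∈ e, ¬G.Reachable u x) : (G.deleteEdges (s ∪ t)).Reachable u v := by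
  obtain ⟨p⟩ := huv
  rw [← deleteEdges_deleteEdges]
  refine ⟨p.toDeleteEdges t fun e hep het => ?_⟩
  induction e using Sym2.ind with
  | _ x y =>
    have hx := p.fst_mem_support_of_mem_edges hep
    exact ht _ het x (Sym2.mem_mk_left x y)
      ((p.reachable_of_mem_support hx).mono (deleteEdges_le s))

lemma symmDiff_edgeSet_deleteEdges_sup_edge_subset (s : Set (Sym2 V)) (u v : V) :
    symmDiff G.edgeSet (G.deleteEdges s ⊔ edge u v).edgeSet ⊆ s ∪ {s(u, v)} := by
  intro e he
  simp only [Set.mem_symmDiff, edgeSet_sup, edgeSet_deleteEdges, edgeSet_edge, Set.mem_union,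
    Set.mem_sdiff] at he
  simp only [Set.mem_union]
  tauto

lemma neighborSet_edge_subsingleton (u v x : V) : ((edge u v).neighborSet x).Subsingleton := by
  intro y hy z hz
  simp only [mem_neighborSet, edge_adj] at hy hz
  grind

lemma neighborSet_edge_of_ne (hu : x ≠ u) (hv : x ≠ v) : (edge u v).neighborSet x = ∅ := by
  ext y
  simp only [mem_neighborSet, edge_adj, Set.mem_empty_iff_false, iff_false]
  tauto

lemma ncard_neighborSet_deleteEdges_singleton {a b : V} (hab : G.Adj a b) :
    ((G.deleteEdges {s(a, b)}).neighborSet a).ncard = (G.neighborSet a).ncard - 1 := by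
  have : (G.deleteEdges {s(a, b)}).neighborSet a = G.neighborSet a \ {b} := by
    ext x
    simp only [mem_neighborSet, deleteEdges_adj, Set.mem_singleton_iff, Sym2.eq_iff, Set.mem_sdiff]
    grind [Adj.ne']
  rw [this]
  exact Set.ncard_sdiff_singleton_of_mem hab

section Finite

variable [Finite V]

lemma ncard_neighborSet_mono (h : G ≤ H) (v : V) :
    (G.neighborSet v).ncard ≤ (H.neighborSet v).ncard :=
  Set.ncard_le_ncard (neighborSet_mono h v)

lemma ncard_neighborSet_sup_edge_le (u v x : V) :
    ((G ⊔ edge u v).neighborSet x).ncard ≤ (G.neighborSet x).ncard + 1 := by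
  rw [neighborSet_sup]
  grw [Set.ncard_union_le,
    Set.ncard_le_one_iff_subsingleton.mpr (neighborSet_edge_subsingleton u v x)]

lemma ncard_symmDiff_edgeSet_deleteEdges_sup_edge_le (s : Set (Sym2 V)) (u v : V) :
    (symmDiff G.edgeSet (G.deleteEdges s ⊔ edge u v).edgeSet).ncard ≤ s.ncard + 1 :=
  calc _ ≤ (s ∪ {s(u, v)}).ncard :=
        Set.ncard_le_ncard (symmDiff_edgeSet_deleteEdges_sup_edge_subset s u v)
    _ ≤ s.ncard + 1 := by grw [Set.ncard_union_le, Set.ncard_singleton]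

lemma ncard_neighborSet_sup_edge_le_of_le_pred {d : ℕ} (hd : 0 < d)
    (hG : ∀ x, (G.neighborSet x).ncard ≤ d) (hu : (G.neighborSet u).ncard ≤ d - 1)
    (hv : (G.neighborSet v).ncard ≤ d - 1) (x : V) :
    ((G ⊔ edge u v).neighborSet x).ncard ≤ d := by
  by_cases hx : x = u ∨ x = v
  · have := ncard_neighborSet_sup_edge_le (G := G) u v x
    rcases hx with rfl | rfl <;> omega
  · rw [not_or] at hx
    rw [neighborSet_sup, neighborSet_edge_of_ne hx.1 hx.2, Set.union_empty]
    exact hG x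

end Finite

structure ConnectedComponent.IsAttachmentPoint (c : G.ConnectedComponent) (d : ℕ)
    (s : Set (Sym2 V)) (v : V) : Prop where
  mem_supp : v ∈ c.supp
  ncard_le_one : s.ncard ≤ 1
  mem_supp_of_mem : ∀ e ∈ s, ∀ x ∈ e, x ∈ c.supp
  ncard_neighborSet_le : ((G.deleteEdges s).neighborSet v).ncard ≤ d - 1
  reachable : ∀ x ∈ c.supp, (G.deleteEdges s).Reachable x v

namespace ConnectedComponent

variable {c : G.ConnectedComponent} {d : ℕ}

lemma isAttachmentPoint_empty (hv : v ∈ c.supp) (hdv : (G.neighborSet v).ncard ≤ d - 1) :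
    c.IsAttachmentPoint d ∅ v where
  mem_supp := hv
  ncard_le_one := by simp
  mem_supp_of_mem := by simp
  ncard_neighborSet_le := by rwa [deleteEdges_empty]
  reachable x hx := by rw [deleteEdges_empty]; exact c.reachable_of_mem_supp hx hv

lemma exists_isAttachmentPoint_of_isCycle (hdeg : ∀ v, (G.neighborSet v).ncard ≤ d)
    (hu : u ∈ c.supp) {w : G.Walk u u} (hw : w.IsCycle) :
    ∃ s v, c.IsAttachmentPoint d s v := by
  obtain ⟨e, he⟩ := List.exists_mem_of_ne_nil _ (Walk.edges_eq_nil.not.mpr hw.not_nil)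
  induction e using Sym2.ind with
  | _ a b =>
    have hab : G.Adj a b := w.adj_of_mem_edges he
    have hbridge : ¬G.IsBridge s(a, b) := fun h => h.notMem_edges_of_isCycle hw he
    have hmem : ∀ x ∈ s(a, b), x ∈ c.supp := by
      intro x hx
      rw [Sym2.mem_iff] at hx
      refine c.mem_supp_of_reachable hu (w.reachable_of_mem_support ?_)
      rcases hx with rfl | rfl
      exacts [w.fst_mem_support_of_mem_edges he, w.snd_mem_support_of_mem_edges he]
    have ha : a ∈ c.supp := hmem a (Sym2.mem_mk_left a b)
    refine ⟨{s(a, b)}, a, ha, by simp, by simpa using hmem, ?_, ?_⟩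
    · rw [ncard_neighborSet_deleteEdges_singleton hab]
      exact Nat.sub_le_sub_right (hdeg a) 1
    · exact fun x hx => (c.reachable_of_mem_supp hx ha).deleteEdges_of_not_isBridge hbridge

lemma exists_isAttachmentPoint (hdeg : ∀ v, (G.neighborSet v).ncard ≤ d)
    (hc : (∃ v ∈ c.supp, (G.neighborSet v).ncard ≤ d - 1) ∨
      (∃ v ∈ c.supp, ∃ w : G.Walk v v, w.IsCycle)) :
    ∃ s v, c.IsAttachmentPoint d s v := by
  rcases hc with ⟨v, hv, hdv⟩ | ⟨u, hu, w, hw⟩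
  exacts [⟨∅, v, isAttachmentPoint_empty hv hdv⟩, exists_isAttachmentPoint_of_isCycle hdeg hu hw]

namespace IsAttachmentPoint

variable {c₁ c₂ : G.ConnectedComponent} {s₁ s₂ : Set (Sym2 V)} {v₁ v₂ : V}

lemma ne (h₁ : c₁.IsAttachmentPoint d s₁ v₁) (h₂ : c₂.IsAttachmentPoint d s₂ v₂) (hne : c₁ ≠ c₂) :
    v₁ ≠ v₂ := by
  rintro rfl
  exact hne (eq_of_common_vertex h₁.mem_supp h₂.mem_supp)

lemma reachable_deleteEdges_union (h₁ : c₁.IsAttachmentPoint d s₁ v₁)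
    (h₂ : c₂.IsAttachmentPoint d s₂ v₂) (hne : c₁ ≠ c₂) (hx : x ∈ c₁.supp) :
    (G.deleteEdges (s₁ ∪ s₂)).Reachable x v₁ :=
  (h₁.reachable x hx).deleteEdges_union fun e he y hy hxy =>
    hne (eq_of_common_vertex (c₁.mem_supp_of_reachable hx hxy) (h₂.mem_supp_of_mem e he y hy))

lemma ncard_neighborSet_deleteEdges_union_le [Finite V] {s : Set (Sym2 V)}
    (h : c.IsAttachmentPoint d s v) (t : Set (Sym2 V)) :
    ((G.deleteEdges (s ∪ t)).neighborSet v).ncard ≤ d - 1 :=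
  (ncard_neighborSet_mono (deleteEdges_anti Set.subset_union_left) v).trans
    h.ncard_neighborSet_le

end IsAttachmentPoint

end ConnectedComponent

end SimpleGraph

/-- in a `d`-bounded graph (`d ≥ 2`) in which every connected component
that is not an isolated vertex contains a vertex of degree at most `d - 1` or contains
a cycle, any two distinct non-trivial connected components can be merged into one
connected component by modifying at most `3` edges, keeping maximum degree at most `d`. -/
theorem stmt7 {V : Type*} [Fintype V] (G : SimpleGraph V) (d : ℕ) (hd2 : 2 ≤ d)
    (hdeg : ∀ v, (G.neighborSet v).ncard ≤ d)
    (hstruct : ∀ c : G.ConnectedComponent, 2 ≤ c.supp.ncard →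
      (∃ v ∈ c.supp, (G.neighborSet v).ncard ≤ d - 1) ∨
      (∃ v ∈ c.supp, ∃ w : G.Walk v v, w.IsCycle))
    (c₁ c₂ : G.ConnectedComponent) (hne : c₁ ≠ c₂)
    (h₁ : 2 ≤ c₁.supp.ncard) (h₂ : 2 ≤ c₂.supp.ncard) :
    ∃ G' : SimpleGraph V,
      (symmDiff G.edgeSet G'.edgeSet).ncard ≤ 3 ∧
      (∀ v, (G'.neighborSet v).ncard ≤ d) ∧
      ∀ x ∈ c₁.supp, ∀ y ∈ c₂.supp, G'.Reachable x y := by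
  obtain ⟨s₁, v₁, hv₁⟩ := c₁.exists_isAttachmentPoint hdeg (hstruct c₁ h₁)
  obtain ⟨s₂, v₂, hv₂⟩ := c₂.exists_isAttachmentPoint hdeg (hstruct c₂ h₂)
  refine ⟨G.deleteEdges (s₁ ∪ s₂) ⊔ edge v₁ v₂, ?_, ?_, ?_⟩
  · calc _ ≤ (s₁ ∪ s₂).ncard + 1 := ncard_symmDiff_edgeSet_deleteEdges_sup_edge_le _ _ _
      _ ≤ s₁.ncard + s₂.ncard + 1 := by grw [Set.ncard_union_le]
      _ ≤ 3 := by grind [hv₁.ncard_le_one, hv₂.ncard_le_one]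
  · refine ncard_neighborSet_sup_edge_le_of_le_pred (by omega)
      (fun x => (ncard_neighborSet_mono (deleteEdges_le _) x).trans (hdeg x))
      (hv₁.ncard_neighborSet_deleteEdges_union_le s₂) ?_
    rw [Set.union_comm]
    exact hv₂.ncard_neighborSet_deleteEdges_union_le s₁
  · intro x hx y hy
    have hx₁ := hv₁.reachable_deleteEdges_union hv₂ hne hx
    have hy₂ := hv₂.reachable_deleteEdges_union hv₁ hne.symm hy
    rw [Set.union_comm] at hy₂
    have hv₁₂ : (edge v₁ v₂).Adj v₁ v₂ := by simp [edge_adj, hv₁.ne hv₂ hne]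
    exact (hx₁.mono le_sup_left).trans <| (hv₁₂.reachable.mono le_sup_right).trans <|
      (hy₂.mono le_sup_left).symm
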